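/- Let f : ℝ^{m₁×m₂} → ℝ be convex and differentiable, λ > 0, and let X, X̃ ∈ ℝ^{m₁×m₂} satisfy f(X) + λ‖X‖_{σ,1} ≤ f(X̃) + λ‖X̃‖_{σ,1} and λ ≥ 2‖∇f(X̃)‖_{σ,∞}. Then ‖X − X̃‖_{σ,1} ≤ 4√(2·rank(X̃)) · ‖X − X̃‖_{σ,2}. (In the paper f = L_Y, the empirical negative log-likelihood, and X̃ = X̄.) -/

import Mathlib

open MeasureTheory ProbabilityTheory Matrix

/-- Singular values of a rectangular real matrix: square roots of the
eigenvalues of `Xᵀ * X`. -/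
noncomputable def singVals {m₁ m₂ : ℕ} (X : Matrix (Fin m₁) (Fin m₂) ℝ) : Fin m₂ → ℝ :=
  fun i => Real.sqrt ((by simpa using Matrix.isHermitian_conjTranspose_mul_self X : (Xᵀ * X).IsHermitian).eigenvalues i)

/-- Nuclear (Schatten-1) norm `‖·‖_{σ,1}`. -/
noncomputable def nucNorm {m₁ m₂ : ℕ} (X : Matrix (Fin m₁) (Fin m₂) ℝ) : ℝ :=
  ∑ i, singVals X i

/-- Operator (Schatten-∞) norm `‖·‖_{σ,∞}`: the largest singular value. -/
noncomputable def opNorm {m₁ m₂ : ℕ} (X : Matrix (Fin m₁) (Fin m₂) ℝ) : ℝ :=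
  ⨆ i, singVals X i

/-- Frobenius (Schatten-2) norm `‖·‖_{σ,2}`. -/
noncomputable def frobNorm {m₁ m₂ : ℕ} (X : Matrix (Fin m₁) (Fin m₂) ℝ) : ℝ :=
  Real.sqrt (∑ k, ∑ l, (X k l) ^ 2)

/-- Entrywise sup norm `‖·‖_∞`. -/
noncomputable def linfNorm {m₁ m₂ : ℕ} (X : Matrix (Fin m₁) (Fin m₂) ℝ) : ℝ :=
  ⨆ p : Fin m₁ × Fin m₂, |X p.1 p.2|

/-- The matrix of the orthogonal projection onto a subspace `S` of `ℝ^k`. -/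
noncomputable def projM {k : ℕ} (S : Submodule ℝ (EuclideanSpace ℝ (Fin k))) :
    Matrix (Fin k) (Fin k) ℝ :=
  LinearMap.toMatrix (EuclideanSpace.basisFun (Fin k) ℝ).toBasis
    (EuclideanSpace.basisFun (Fin k) ℝ).toBasis
    (S.subtype ∘ₗ (S.orthogonalProjectionOnto).toLinearMap)

/-- The span `S₁(X)` of the left singular vectors of `X`, i.e. its column space
(`S₂(X)`, the span of the right singular vectors, is `colSpace Xᵀ`). -/
noncomputable def colSpace {m₁ m₂ : ℕ} (X : Matrix (Fin m₁) (Fin m₂) ℝ) :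
    Submodule ℝ (EuclideanSpace ℝ (Fin m₁)) :=
  LinearMap.range (Matrix.toEuclideanLin X)

/-- The projection `P⊥_X(T) = P_{S₁(X)⊥} T P_{S₂(X)⊥}`. -/
noncomputable def Pperp {m₁ m₂ : ℕ} (X T : Matrix (Fin m₁) (Fin m₂) ℝ) :
    Matrix (Fin m₁) (Fin m₂) ℝ :=
  projM (Submodule.orthogonal (colSpace X)) * T * projM (Submodule.orthogonal (colSpace Xᵀ))

/-- The projection `P_X(T) = T - P⊥_X(T)`. -/
noncomputable def Ppar {m₁ m₂ : ℕ} (X T : Matrix (Fin m₁) (Fin m₂) ℝ) :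
    Matrix (Fin m₁) (Fin m₂) ℝ :=
  T - Pperp X T

attribute [local instance] Matrix.normedAddCommGroup Matrix.normedSpace

/-!
Write `Δ = X - X̃` and split it as `Δ = P_X̃(Δ) + P⊥_X̃(Δ)`. The row and column spaces of `P⊥_X̃(Δ)`
are orthogonal to those of `X̃`, so the nuclear norm is additive on `X̃ + P⊥_X̃(Δ)`. Combined with
the triangle inequality, the first-order convexity bound
`f X̃ - f X ≤ ⟨∇f(X̃), -Δ⟩ ≤ ‖∇f(X̃)‖_{σ,∞} ‖Δ‖_{σ,1}` and `λ ≥ 2‖∇f(X̃)‖_{σ,∞}`, this gives the cone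
condition `‖P⊥_X̃(Δ)‖_{σ,1} ≤ 3 ‖P_X̃(Δ)‖_{σ,1}`. Hence
`‖Δ‖_{σ,1} ≤ 4 ‖P_X̃(Δ)‖_{σ,1} ≤ 4 √(rank P_X̃(Δ)) ‖P_X̃(Δ)‖_{σ,2}`, and
`P_X̃(Δ) = P_{S₁} Δ + P_{S₁⊥} Δ P_{S₂}` has rank at most `2 rank X̃` and is orthogonal to `P⊥_X̃(Δ)`,
so its Frobenius norm is at most `‖Δ‖_{σ,2}`.

The singular vectors are built from an orthonormal eigenbasis `vᵢ` of `XᵀX` as `uᵢ = σᵢ⁻¹ X vᵢ`.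
The facts about the nuclear norm (triangle inequality, duality with the operator norm, additivity
on orthogonal pieces) all come from `∑ₖ xₖᵀ X yₖ ≤ ‖X‖_{σ,1}` for orthogonal families of vectors
of length at most one, which is Bessel's inequality plus Cauchy–Schwarz.
-/

open Finset

section SubOrthonormal

variable {n ι κ : Type*} [Fintype n]

def IsSubOrthonormal (w : ι → n → ℝ) : Prop :=
  Pairwise (fun i j => w i ⬝ᵥ w j = 0) ∧ ∀ i, w i ⬝ᵥ w i ≤ 1

theorem isSubOrthonormal_of_dotProduct_eq_ite [DecidableEq ι] {w : ι → n → ℝ} (p : ι → Prop)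
    [DecidablePred p] (h : ∀ i j, w i ⬝ᵥ w j = if i = j ∧ p i then 1 else 0) :
    IsSubOrthonormal w :=
  ⟨fun i j hij => by simp [h, hij], fun i => by rw [h]; split_ifs <;> norm_num⟩

theorem IsSubOrthonormal.sum_elim {w : ι → n → ℝ} {z : κ → n → ℝ} (hw : IsSubOrthonormal w)
    (hz : IsSubOrthonormal z) (hwz : ∀ i j, w i ⬝ᵥ z j = 0) :
    IsSubOrthonormal (Sum.elim w z) := by
  refine ⟨?_, by rintro (i | i) <;> simp [hw.2, hz.2]⟩
  rintro (i | i) (j | j) hij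
  · exact hw.1 (fun h => hij (congrArg _ h))
  · exact hwz i j
  · exact (dotProduct_comm _ _).trans (hwz j i)
  · exact hz.1 (fun h => hij (congrArg _ h))

theorem IsSubOrthonormal.sum_sq_dotProduct_le [Fintype ι] {w : ι → n → ℝ}
    (hw : IsSubOrthonormal w) (x : n → ℝ) : ∑ i, (w i ⬝ᵥ x) ^ 2 ≤ x ⬝ᵥ x := by
  set y := ∑ i, (w i ⬝ᵥ x) • w i
  have hyx : y ⬝ᵥ x = ∑ i, (w i ⬝ᵥ x) ^ 2 := by
    simp only [y, sum_dotProduct, smul_dotProduct, smul_eq_mul, sq]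
  have hyy : y ⬝ᵥ y ≤ ∑ i, (w i ⬝ᵥ x) ^ 2 := by
    have : y ⬝ᵥ y = ∑ i, (w i ⬝ᵥ x) ^ 2 * (w i ⬝ᵥ w i) := by
      simp only [y, sum_dotProduct, dotProduct_sum, smul_dotProduct, dotProduct_smul,
        smul_eq_mul]
      refine sum_congr rfl fun i _ => ?_
      rw [sum_eq_single i (fun j _ hji => by rw [hw.1 hji, mul_zero]) (by simp)]
      ring
    rw [this]
    exact sum_le_sum fun i _ => mul_le_of_le_one_right (sq_nonneg _) (hw.2 i)
  have h0 : 0 ≤ (x - y) ⬝ᵥ (x - y) := dotProduct_self_star_nonneg (x - y)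
  rw [sub_dotProduct, dotProduct_sub, dotProduct_sub, dotProduct_comm x y, hyx] at h0
  linarith

theorem IsSubOrthonormal.sum_abs_mul_abs_le_one [Fintype ι] {m : Type*} [Fintype m]
    {w : ι → n → ℝ} {z : ι → m → ℝ} (hw : IsSubOrthonormal w) (hz : IsSubOrthonormal z) {x : n → ℝ}
    {y : m → ℝ} (hx : x ⬝ᵥ x ≤ 1) (hy : y ⬝ᵥ y ≤ 1) :
    ∑ i, |w i ⬝ᵥ x| * |z i ⬝ᵥ y| ≤ 1 := by
  have hcs := sum_mul_sq_le_sq_mul_sq univ (fun i => |w i ⬝ᵥ x|) (fun i => |z i ⬝ᵥ y|)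
  simp only [sq_abs] at hcs
  have := mul_le_one₀ ((hw.sum_sq_dotProduct_le x).trans hx)
    (sum_nonneg fun i _ => sq_nonneg _) ((hz.sum_sq_dotProduct_le y).trans hy)
  exact le_of_abs_le ((sq_le_one_iff_abs_le_one _).1 (hcs.trans this))

end SubOrthonormal

theorem mulVec_dotProduct_mulVec {k m n : Type*} [Fintype k] [Fintype m] [Fintype n]
    (M : Matrix k m ℝ) (N : Matrix k n ℝ) (x : m → ℝ) (y : n → ℝ) :
    (M *ᵥ x) ⬝ᵥ (N *ᵥ y) = x ⬝ᵥ ((Mᵀ * N) *ᵥ y) := by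
  rw [← vecMul_transpose, ← dotProduct_mulVec, mulVec_mulVec]

theorem Matrix.rank_add_le {m n R : Type*} [Fintype m] [Fintype n] [Field R] (A B : Matrix m n R) :
    (A + B).rank ≤ A.rank + B.rank := by
  rw [rank, mulVecLin_add]
  exact (Submodule.finrank_mono (LinearMap.range_add_le _ _)).trans
    (Submodule.finrank_add_le_finrank_add_finrank _ _)

theorem trace_transpose_mul_self_nonneg {m n : Type*} [Fintype m] [Fintype n]
    (M : Matrix m n ℝ) : 0 ≤ trace (Mᵀ * M) := by
  simpa using (posSemidef_conjTranspose_mul_self M).trace_nonneg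

section SingularValueDecomposition

variable {m₁ m₂ : ℕ} (A : Matrix (Fin m₁) (Fin m₂) ℝ)

theorem isHermitian_transpose_mul_self : (Aᵀ * A).IsHermitian := by
  simpa using isHermitian_conjTranspose_mul_self A

noncomputable def gramEigvec (i : Fin m₂) : Fin m₂ → ℝ :=
  ((isHermitian_transpose_mul_self A).eigenvectorBasis i).ofLp

-- `σᵢ⁻¹ = 0` when `σᵢ = 0`, so the singular vectors of a vanishing singular value are zero.
noncomputable def leftSingVec (i : Fin m₂) : Fin m₁ → ℝ :=
  (singVals A i)⁻¹ • (A *ᵥ gramEigvec A i)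

-- Defined through `Aᵀ uᵢ` rather than as `vᵢ`, so that it vanishes with `σᵢ` and orthogonality
-- conditions on `A` transfer to it directly.
noncomputable def rightSingVec (i : Fin m₂) : Fin m₂ → ℝ :=
  (singVals A i)⁻¹ • (Aᵀ *ᵥ leftSingVec A i)

theorem singVals_nonneg (i : Fin m₂) : 0 ≤ singVals A i := Real.sqrt_nonneg _

theorem sq_singVals (i : Fin m₂) :
    singVals A i ^ 2 = (isHermitian_transpose_mul_self A).eigenvalues i :=
  Real.sq_sqrt (eigenvalues_conjTranspose_mul_self_nonneg A i)

theorem gramEigvec_dotProduct (i j : Fin m₂) :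
    gramEigvec A i ⬝ᵥ gramEigvec A j = if i = j then 1 else 0 := by
  have h := (isHermitian_transpose_mul_self A).eigenvectorBasis.orthonormal
  rw [orthonormal_iff_ite] at h
  simpa [EuclideanSpace.inner_eq_star_dotProduct, dotProduct_comm, gramEigvec] using h i j

theorem gram_mulVec_gramEigvec (i : Fin m₂) :
    (Aᵀ * A) *ᵥ gramEigvec A i = singVals A i ^ 2 • gramEigvec A i := by
  rw [sq_singVals]
  exact (isHermitian_transpose_mul_self A).mulVec_eigenvectorBasis i

theorem mulVec_gramEigvec_dotProduct (i j : Fin m₂) :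
    (A *ᵥ gramEigvec A i) ⬝ᵥ (A *ᵥ gramEigvec A j) =
      if i = j then singVals A i ^ 2 else 0 := by
  rw [mulVec_dotProduct_mulVec, gram_mulVec_gramEigvec, dotProduct_smul, gramEigvec_dotProduct]
  split_ifs with h <;> simp [h]

theorem mulVec_gramEigvec (i : Fin m₂) :
    A *ᵥ gramEigvec A i = singVals A i • leftSingVec A i := by
  rcases eq_or_ne (singVals A i) 0 with h | h
  · have := mulVec_gramEigvec_dotProduct A i i
    rw [if_pos rfl, h] at this
    simpa [h] using dotProduct_self_eq_zero.1 (by simpa using this)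
  · rw [leftSingVec, smul_smul, mul_inv_cancel₀ h, one_smul]

theorem leftSingVec_dotProduct (i j : Fin m₂) :
    leftSingVec A i ⬝ᵥ leftSingVec A j = if i = j ∧ singVals A i ≠ 0 then 1 else 0 := by
  simp only [leftSingVec, smul_dotProduct, dotProduct_smul, mulVec_gramEigvec_dotProduct,
    smul_eq_mul]
  rcases eq_or_ne i j with rfl | h
  · rcases eq_or_ne (singVals A i) 0 with hσ | hσ
    · simp [hσ]
    · simp [hσ]
      field_simp
  · simp [h]

theorem transpose_mulVec_leftSingVec (i : Fin m₂) :
    Aᵀ *ᵥ leftSingVec A i = singVals A i • gramEigvec A i := by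
  rw [leftSingVec, mulVec_smul, mulVec_mulVec, gram_mulVec_gramEigvec, smul_smul]
  rcases eq_or_ne (singVals A i) 0 with h | h
  · simp [h]
  · field_simp

theorem rightSingVec_eq (i : Fin m₂) :
    rightSingVec A i = ((singVals A i)⁻¹ * singVals A i) • gramEigvec A i := by
  rw [rightSingVec, transpose_mulVec_leftSingVec, smul_smul]

theorem rightSingVec_dotProduct (i j : Fin m₂) :
    rightSingVec A i ⬝ᵥ rightSingVec A j = if i = j ∧ singVals A i ≠ 0 then 1 else 0 := by
  simp only [rightSingVec_eq, smul_dotProduct, dotProduct_smul, gramEigvec_dotProduct,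
    smul_eq_mul]
  rcases eq_or_ne i j with rfl | h
  · rcases eq_or_ne (singVals A i) 0 with hσ | hσ <;> simp [hσ]
  · simp [h]

theorem mulVec_rightSingVec (i : Fin m₂) :
    A *ᵥ rightSingVec A i = singVals A i • leftSingVec A i := by
  rw [rightSingVec_eq, mulVec_smul, mulVec_gramEigvec, smul_smul]
  rcases eq_or_ne (singVals A i) 0 with h | h
  · simp [h]
  · field_simp

theorem isSubOrthonormal_leftSingVec : IsSubOrthonormal (leftSingVec A) :=
  isSubOrthonormal_of_dotProduct_eq_ite _ (leftSingVec_dotProduct A)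

theorem isSubOrthonormal_rightSingVec : IsSubOrthonormal (rightSingVec A) :=
  isSubOrthonormal_of_dotProduct_eq_ite _ (rightSingVec_dotProduct A)

theorem sum_dotProduct_smul_gramEigvec (x : Fin m₂ → ℝ) :
    ∑ i, (gramEigvec A i ⬝ᵥ x) • gramEigvec A i = x := by
  have := congrArg WithLp.ofLp
    ((isHermitian_transpose_mul_self A).eigenvectorBasis.sum_repr' (WithLp.toLp 2 x))
  simpa [EuclideanSpace.inner_eq_star_dotProduct, dotProduct_comm, gramEigvec] using this

theorem sum_vecMulVec_gramEigvec :
    ∑ i, vecMulVec (A *ᵥ gramEigvec A i) (gramEigvec A i) = A := by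
  refine ext_iff_mulVec.2 fun x => ?_
  conv_rhs => rw [← sum_dotProduct_smul_gramEigvec A x]
  simp [sum_mulVec, vecMulVec_mulVec, mulVec_sum, mulVec_smul]

theorem sum_singVals_smul_vecMulVec :
    ∑ i, singVals A i • vecMulVec (leftSingVec A i) (rightSingVec A i) = A := by
  conv_rhs => rw [← sum_vecMulVec_gramEigvec A]
  refine sum_congr rfl fun i _ => ?_
  rw [mulVec_gramEigvec, rightSingVec_eq]
  ext k l
  simp only [Matrix.smul_apply, vecMulVec_apply, Pi.smul_apply, smul_eq_mul]
  rcases eq_or_ne (singVals A i) 0 with h | h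
  · simp [h]
  · field_simp

end SingularValueDecomposition

section NuclearNorm

variable {m₁ m₂ : ℕ}

theorem dotProduct_mulVec_eq_sum (A : Matrix (Fin m₁) (Fin m₂) ℝ) (x : Fin m₁ → ℝ)
    (y : Fin m₂ → ℝ) : x ⬝ᵥ (A *ᵥ y) =
      ∑ i, singVals A i * ((x ⬝ᵥ leftSingVec A i) * (rightSingVec A i ⬝ᵥ y)) := by
  conv_lhs => rw [← sum_singVals_smul_vecMulVec A]
  simp only [sum_mulVec, smul_mulVec, vecMulVec_mulVec, dotProduct_sum, dotProduct_smul,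
    MulOpposite.smul_eq_mul_unop, MulOpposite.unop_op, smul_eq_mul]

theorem trace_transpose_mul_eq_sum (G D : Matrix (Fin m₁) (Fin m₂) ℝ) :
    trace (Gᵀ * D) = ∑ i, singVals D i * (leftSingVec D i ⬝ᵥ (G *ᵥ rightSingVec D i)) := by
  conv_lhs => rw [← sum_singVals_smul_vecMulVec D]
  simp only [Matrix.mul_sum, trace_sum, Matrix.mul_smul, trace_smul, mul_vecMulVec,
    trace_vecMulVec, mulVec_transpose, ← dotProduct_mulVec, smul_eq_mul]

theorem nucNorm_eq_sum_dotProduct_mulVec (A : Matrix (Fin m₁) (Fin m₂) ℝ) :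
    nucNorm A = ∑ i, leftSingVec A i ⬝ᵥ (A *ᵥ rightSingVec A i) := by
  refine sum_congr rfl fun i _ => ?_
  rw [mulVec_rightSingVec, dotProduct_smul, leftSingVec_dotProduct, smul_eq_mul]
  rcases eq_or_ne (singVals A i) 0 with h | h <;> simp [h]

theorem nucNorm_nonneg (A : Matrix (Fin m₁) (Fin m₂) ℝ) : 0 ≤ nucNorm A :=
  sum_nonneg fun i _ => singVals_nonneg A i

theorem singVals_le_opNorm (A : Matrix (Fin m₁) (Fin m₂) ℝ) (i : Fin m₂) :
    singVals A i ≤ opNorm A :=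
  le_ciSup (Set.finite_range _).bddAbove i

theorem opNorm_nonneg (A : Matrix (Fin m₁) (Fin m₂) ℝ) : 0 ≤ opNorm A :=
  Real.iSup_nonneg (singVals_nonneg A)

theorem mul_mul_le_mul_abs_mul_abs {σ c a b : ℝ} (hσ : 0 ≤ σ) (hσc : σ ≤ c) :
    σ * (a * b) ≤ c * (|a| * |b|) := by
  rw [← abs_mul]
  exact (mul_le_mul_of_nonneg_left (le_abs_self _) hσ).trans
    (mul_le_mul_of_nonneg_right hσc (abs_nonneg _))

theorem sum_dotProduct_mulVec_le_nucNorm {ι : Type*} [Fintype ι]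
    (A : Matrix (Fin m₁) (Fin m₂) ℝ) {x : ι → Fin m₁ → ℝ} {y : ι → Fin m₂ → ℝ}
    (hx : IsSubOrthonormal x) (hy : IsSubOrthonormal y) :
    ∑ c, x c ⬝ᵥ (A *ᵥ y c) ≤ nucNorm A := by
  simp only [dotProduct_mulVec_eq_sum]
  rw [sum_comm]
  refine sum_le_sum fun i _ => ?_
  calc ∑ c, singVals A i * ((x c ⬝ᵥ leftSingVec A i) * (rightSingVec A i ⬝ᵥ y c))
      ≤ ∑ c, singVals A i * (|x c ⬝ᵥ leftSingVec A i| * |y c ⬝ᵥ rightSingVec A i|) :=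
        sum_le_sum fun c _ => by
          rw [dotProduct_comm (rightSingVec A i)]
          exact mul_mul_le_mul_abs_mul_abs (singVals_nonneg A i) le_rfl
    _ ≤ singVals A i := by
        rw [← mul_sum]
        exact mul_le_of_le_one_right (singVals_nonneg A i)
          (hx.sum_abs_mul_abs_le_one hy ((isSubOrthonormal_leftSingVec A).2 i)
            ((isSubOrthonormal_rightSingVec A).2 i))

theorem dotProduct_mulVec_le_opNorm (A : Matrix (Fin m₁) (Fin m₂) ℝ) {x : Fin m₁ → ℝ}
    {y : Fin m₂ → ℝ} (hx : x ⬝ᵥ x ≤ 1) (hy : y ⬝ᵥ y ≤ 1) : x ⬝ᵥ (A *ᵥ y) ≤ opNorm A := by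
  rw [dotProduct_mulVec_eq_sum]
  calc ∑ i, singVals A i * ((x ⬝ᵥ leftSingVec A i) * (rightSingVec A i ⬝ᵥ y))
      ≤ ∑ i, opNorm A * (|leftSingVec A i ⬝ᵥ x| * |rightSingVec A i ⬝ᵥ y|) :=
        sum_le_sum fun i _ => by
          rw [dotProduct_comm x]
          exact mul_mul_le_mul_abs_mul_abs (singVals_nonneg A i) (singVals_le_opNorm A i)
    _ ≤ opNorm A := by
        rw [← mul_sum]
        exact mul_le_of_le_one_right (opNorm_nonneg A)
          ((isSubOrthonormal_leftSingVec A).sum_abs_mul_abs_le_one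
            (isSubOrthonormal_rightSingVec A) hx hy)

theorem trace_transpose_mul_le_opNorm_mul_nucNorm (G D : Matrix (Fin m₁) (Fin m₂) ℝ) :
    trace (Gᵀ * D) ≤ opNorm G * nucNorm D := by
  rw [trace_transpose_mul_eq_sum, nucNorm, mul_sum]
  refine sum_le_sum fun i _ => ?_
  rw [mul_comm (opNorm G)]
  exact mul_le_mul_of_nonneg_left (dotProduct_mulVec_le_opNorm G
    ((isSubOrthonormal_leftSingVec D).2 i) ((isSubOrthonormal_rightSingVec D).2 i))
    (singVals_nonneg D i)

theorem nucNorm_add_le (A B : Matrix (Fin m₁) (Fin m₂) ℝ) :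
    nucNorm (A + B) ≤ nucNorm A + nucNorm B := by
  rw [nucNorm_eq_sum_dotProduct_mulVec (A + B)]
  simp only [add_mulVec, dotProduct_add, sum_add_distrib]
  exact add_le_add
    (sum_dotProduct_mulVec_le_nucNorm A (isSubOrthonormal_leftSingVec _)
      (isSubOrthonormal_rightSingVec _))
    (sum_dotProduct_mulVec_le_nucNorm B (isSubOrthonormal_leftSingVec _)
      (isSubOrthonormal_rightSingVec _))

-- `rw` cannot rewrite a matrix under the proof of its hermitianity that `eigenvalues` depends on.
theorem eigenvalues_congr {n : ℕ} {M N : Matrix (Fin n) (Fin n) ℝ} (hM : M.IsHermitian)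
    (hN : N.IsHermitian) (h : M = N) : hM.eigenvalues = hN.eigenvalues := by
  subst h
  rfl

theorem singVals_neg (A : Matrix (Fin m₁) (Fin m₂) ℝ) : singVals (-A) = singVals A := by
  funext i
  exact congrArg (fun e => Real.sqrt (e i)) (eigenvalues_congr
    (isHermitian_transpose_mul_self (-A)) (isHermitian_transpose_mul_self A) (by simp))

theorem nucNorm_neg (A : Matrix (Fin m₁) (Fin m₂) ℝ) : nucNorm (-A) = nucNorm A := by
  rw [nucNorm, nucNorm, singVals_neg]

theorem nucNorm_sub_le (A B : Matrix (Fin m₁) (Fin m₂) ℝ) :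
    nucNorm (A - B) ≤ nucNorm A + nucNorm B := by
  rw [sub_eq_add_neg, ← nucNorm_neg B]
  exact nucNorm_add_le A (-B)

end NuclearNorm

section Orthogonal

variable {m₁ m₂ : ℕ}

theorem leftSingVec_dotProduct_leftSingVec_eq_zero {A B : Matrix (Fin m₁) (Fin m₂) ℝ}
    (h : Aᵀ * B = 0) (i j : Fin m₂) : leftSingVec A i ⬝ᵥ leftSingVec B j = 0 := by
  simp [leftSingVec, mulVec_dotProduct_mulVec, h]

theorem rightSingVec_dotProduct_rightSingVec_eq_zero {A B : Matrix (Fin m₁) (Fin m₂) ℝ}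
    (h : A * Bᵀ = 0) (i j : Fin m₂) : rightSingVec A i ⬝ᵥ rightSingVec B j = 0 := by
  simp [rightSingVec, mulVec_dotProduct_mulVec, h]

theorem mulVec_rightSingVec_eq_zero {A B : Matrix (Fin m₁) (Fin m₂) ℝ} (h : B * Aᵀ = 0)
    (i : Fin m₂) : B *ᵥ rightSingVec A i = 0 := by
  rw [rightSingVec, mulVec_smul, mulVec_mulVec, h, zero_mulVec, smul_zero]

theorem nucNorm_add_of_transpose_mul_eq_zero {A B : Matrix (Fin m₁) (Fin m₂) ℝ}
    (h₁ : Aᵀ * B = 0) (h₂ : A * Bᵀ = 0) : nucNorm (A + B) = nucNorm A + nucNorm B := by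
  have h₃ : B * Aᵀ = 0 := by simpa using congrArg transpose h₂
  refine le_antisymm (nucNorm_add_le A B) ?_
  have hx := (isSubOrthonormal_leftSingVec A).sum_elim (isSubOrthonormal_leftSingVec B)
    (leftSingVec_dotProduct_leftSingVec_eq_zero h₁)
  have hy := (isSubOrthonormal_rightSingVec A).sum_elim (isSubOrthonormal_rightSingVec B)
    (rightSingVec_dotProduct_rightSingVec_eq_zero h₂)
  refine Eq.trans_le ?_ (sum_dotProduct_mulVec_le_nucNorm (A + B) hx hy)
  simp [Fintype.sum_sum_type, add_mulVec, mulVec_rightSingVec_eq_zero h₃,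
    mulVec_rightSingVec_eq_zero h₂, nucNorm_eq_sum_dotProduct_mulVec A,
    nucNorm_eq_sum_dotProduct_mulVec B]

end Orthogonal

section RankBound

variable {m₁ m₂ : ℕ}

theorem card_singVals_ne_zero (A : Matrix (Fin m₁) (Fin m₂) ℝ) :
    #{i | singVals A i ≠ 0} = A.rank := by
  rw [← rank_transpose_mul_self, (isHermitian_transpose_mul_self A).rank_eq_card_non_zero_eigs,
    Fintype.card_subtype]
  congr 1
  ext i
  simp [← sq_singVals]

theorem frobNorm_eq_sqrt_trace (A : Matrix (Fin m₁) (Fin m₂) ℝ) :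
    frobNorm A = Real.sqrt (trace (Aᵀ * A)) := by
  rw [frobNorm, trace, sum_comm]
  simp [mul_apply, sq]

theorem frobNorm_eq_sqrt_sum_sq_singVals (A : Matrix (Fin m₁) (Fin m₂) ℝ) :
    frobNorm A = Real.sqrt (∑ i, singVals A i ^ 2) := by
  rw [frobNorm_eq_sqrt_trace, (isHermitian_transpose_mul_self A).trace_eq_sum_eigenvalues]
  simp [sq_singVals]

theorem nucNorm_le_sqrt_rank_mul_frobNorm (A : Matrix (Fin m₁) (Fin m₂) ℝ) :
    nucNorm A ≤ Real.sqrt A.rank * frobNorm A := by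
  have hsq : nucNorm A ^ 2 ≤ A.rank * ∑ i, singVals A i ^ 2 := by
    rw [nucNorm, ← sum_filter_ne_zero, ← card_singVals_ne_zero]
    exact (sq_sum_le_card_mul_sum_sq).trans (mul_le_mul_of_nonneg_left
      (sum_le_sum_of_subset_of_nonneg (filter_subset _ _) fun i _ _ => sq_nonneg _)
      (Nat.cast_nonneg _))
  rw [frobNorm_eq_sqrt_sum_sq_singVals, ← Real.sqrt_mul (Nat.cast_nonneg _)]
  exact Real.le_sqrt_of_sq_le hsq

end RankBound

section Projection

variable {k : ℕ} (S : Submodule ℝ (EuclideanSpace ℝ (Fin k)))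

theorem toEuclideanLin_projM : toEuclideanLin (projM S) = (S.starProjection : _ →ₗ[ℝ] _) := by
  rw [toEuclideanLin_eq_toLin_orthonormal, projM, Matrix.toLin_toMatrix]
  rfl

theorem projM_orthogonal : projM Sᗮ = 1 - projM S := by
  apply toEuclideanLin.injective
  rw [map_sub, toEuclideanLin_projM, toEuclideanLin_projM, Submodule.starProjection_orthogonal]
  ext x : 1
  simp

theorem projM_mul_self : projM S * projM S = projM S := by
  apply toEuclideanLin.injective
  rw [toLpLin_mul 2 2 2, toEuclideanLin_projM]
  ext x : 1
  exact Submodule.starProjection_eq_self_iff.2 (S.starProjection_apply_mem x)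

theorem projM_transpose : (projM S)ᵀ = projM S := by
  have : (projM S).IsHermitian := by
    rw [← isSymmetric_toEuclideanLin_iff, toEuclideanLin_projM]
    exact S.starProjection_isSymmetric
  exact this

theorem rank_projM : (projM S).rank = Module.finrank ℝ S := by
  rw [rank_eq_finrank_range_toLin _ (EuclideanSpace.basisFun (Fin k) ℝ).toBasis
    (EuclideanSpace.basisFun (Fin k) ℝ).toBasis, ← toEuclideanLin_eq_toLin_orthonormal,
    toEuclideanLin_projM]
  exact congrArg (fun T : Submodule ℝ _ => Module.finrank ℝ T) S.range_starProjection

end Projection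

section ColumnSpace

variable {m₁ m₂ : ℕ}

theorem finrank_colSpace (A : Matrix (Fin m₁) (Fin m₂) ℝ) :
    Module.finrank ℝ (colSpace A) = A.rank :=
  (rank_eq_finrank_range_toLin A (EuclideanSpace.basisFun (Fin m₁) ℝ).toBasis
    (EuclideanSpace.basisFun (Fin m₂) ℝ).toBasis).symm

theorem projM_colSpace_mul (A : Matrix (Fin m₁) (Fin m₂) ℝ) :
    projM (colSpace A) * A = A := by
  apply toEuclideanLin.injective
  rw [toLpLin_mul 2 2 2, toEuclideanLin_projM]
  ext x : 1
  simp only [LinearMap.comp_apply]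
  exact (Submodule.starProjection_eq_self_iff).2 (LinearMap.mem_range_self _ _)

theorem mul_projM_colSpace_transpose (A : Matrix (Fin m₁) (Fin m₂) ℝ) :
    A * projM (colSpace Aᵀ) = A := by
  simpa [transpose_mul, projM_transpose] using congrArg transpose (projM_colSpace_mul Aᵀ)

end ColumnSpace

section Frobenius

variable {m₁ m₂ : ℕ}

theorem frobNorm_le_frobNorm_add {M N : Matrix (Fin m₁) (Fin m₂) ℝ} (h : trace (Mᵀ * N) = 0) :
    frobNorm M ≤ frobNorm (M + N) := by
  have h' : trace (Nᵀ * M) = 0 := by rw [← trace_transpose, transpose_mul, transpose_transpose, h]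
  rw [frobNorm_eq_sqrt_trace, frobNorm_eq_sqrt_trace]
  refine Real.sqrt_le_sqrt ?_
  simp only [transpose_add, Matrix.add_mul, Matrix.mul_add, trace_add, h, h']
  linarith [trace_transpose_mul_self_nonneg N]

end Frobenius

section Decomposition

variable {m₁ m₂ : ℕ} (A D : Matrix (Fin m₁) (Fin m₂) ℝ)

theorem projM_orthogonal_colSpace_mul : projM (colSpace A)ᗮ * A = 0 := by
  rw [projM_orthogonal, Matrix.sub_mul, Matrix.one_mul, projM_colSpace_mul, sub_self]

theorem mul_projM_orthogonal_colSpace_transpose : A * projM (colSpace Aᵀ)ᗮ = 0 := by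
  rw [projM_orthogonal, Matrix.mul_sub, Matrix.mul_one, mul_projM_colSpace_transpose, sub_self]

theorem transpose_mul_Pperp : Aᵀ * Pperp A D = 0 := by
  have : Aᵀ * projM (colSpace A)ᗮ = 0 := by
    simpa [transpose_mul, projM_transpose] using
      congrArg transpose (projM_orthogonal_colSpace_mul A)
  rw [Pperp, ← Matrix.mul_assoc, ← Matrix.mul_assoc, this, Matrix.zero_mul, Matrix.zero_mul]

theorem mul_transpose_Pperp : A * (Pperp A D)ᵀ = 0 := by
  rw [Pperp, transpose_mul, transpose_mul, projM_transpose, ← Matrix.mul_assoc, ← Matrix.mul_assoc,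
    mul_projM_orthogonal_colSpace_transpose, Matrix.zero_mul, Matrix.zero_mul]

theorem nucNorm_add_Pperp : nucNorm (A + Pperp A D) = nucNorm A + nucNorm (Pperp A D) :=
  nucNorm_add_of_transpose_mul_eq_zero (transpose_mul_Pperp A D) (mul_transpose_Pperp A D)

theorem Ppar_eq : Ppar A D =
    projM (colSpace A) * D + projM (colSpace A)ᗮ * D * projM (colSpace Aᵀ) := by
  rw [Ppar, Pperp, projM_orthogonal (colSpace Aᵀ), projM_orthogonal (colSpace A)]
  simp only [Matrix.mul_sub, Matrix.sub_mul, Matrix.mul_one, Matrix.one_mul]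
  abel

theorem rank_Ppar_le : (Ppar A D).rank ≤ 2 * A.rank := by
  rw [Ppar_eq]
  refine (rank_add_le _ _).trans ?_
  have h₁ := (rank_mul_le_left (projM (colSpace A)) D).trans_eq
    ((rank_projM _).trans (finrank_colSpace A))
  have h₂ := (rank_mul_le_right (projM (colSpace A)ᗮ * D) (projM (colSpace Aᵀ))).trans_eq
    ((rank_projM _).trans ((finrank_colSpace Aᵀ).trans (rank_transpose A)))
  omega

theorem trace_transpose_Ppar_mul_Pperp : trace ((Ppar A D)ᵀ * Pperp A D) = 0 := by
  set P := projM (colSpace A)ᗮ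
  set Q := projM (colSpace Aᵀ)ᗮ
  have hP : Pᵀ * P = P := by rw [projM_transpose, projM_mul_self]
  have hQ : Q * Qᵀ = Q := by rw [projM_transpose, projM_mul_self]
  rw [Ppar, Pperp, transpose_sub, Matrix.sub_mul, trace_sub, sub_eq_zero, transpose_mul,
    transpose_mul]
  symm
  calc trace (Qᵀ * (Dᵀ * Pᵀ) * (P * D * Q)) = trace (Qᵀ * (Dᵀ * (Pᵀ * P) * D * Q)) := by
        simp only [Matrix.mul_assoc]
    _ = trace (Dᵀ * P * D * (Q * Qᵀ)) := by
        rw [hP, trace_mul_comm]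
        simp only [Matrix.mul_assoc]
    _ = trace (Dᵀ * (P * D * Q)) := by
        rw [hQ]
        simp only [Matrix.mul_assoc]

theorem frobNorm_Ppar_le : frobNorm (Ppar A D) ≤ frobNorm D := by
  simpa [Ppar] using frobNorm_le_frobNorm_add (trace_transpose_Ppar_mul_Pperp A D)

end Decomposition

theorem ConvexOn.le_sub_of_hasFDerivAt {E : Type*} [NormedAddCommGroup E] [NormedSpace ℝ E]
    {f : E → ℝ} {f' : E →L[ℝ] ℝ} {x : E} (hf : ConvexOn ℝ Set.univ f) (hx : HasFDerivAt f f' x)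
    (y : E) : f' (y - x) ≤ f y - f x := by
  set g : ℝ → ℝ := fun t => f (x + t • (y - x))
  have hg : ConvexOn ℝ Set.univ g := by
    simpa [Function.comp_def, AffineMap.lineMap_apply, add_comm] using
      hf.comp_affineMap (AffineMap.lineMap x y)
  have hg' : HasDerivAt g (f' (y - x)) 0 := by
    have hline : HasDerivAt (fun t : ℝ => x + t • (y - x)) (y - x) 0 :=
      ((hasDerivAt_id 0).smul_const (y - x)).const_add x |>.congr_deriv (one_smul _ _)
    exact (by simpa using hx : HasFDerivAt f f' (x + (0 : ℝ) • (y - x))).comp_hasDerivAt 0 hline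
  simpa [g, slope_def_field] using
    hg.le_slope_of_hasDerivAt (Set.mem_univ 0) (Set.mem_univ 1) zero_lt_one hg'

theorem apply_eq_trace_transpose_mul {m n : Type*} [Fintype m] [Fintype n] [DecidableEq m]
    [DecidableEq n] (L : Matrix m n ℝ →ₗ[ℝ] ℝ) {G : Matrix m n ℝ}
    (hG : ∀ k l, G k l = L (single k l 1)) (D : Matrix m n ℝ) : L D = trace (Gᵀ * D) := by
  conv_lhs => rw [matrix_eq_sum_single D]
  simp only [map_sum, trace, Matrix.diag, mul_apply, transpose_apply]
  rw [Finset.sum_comm]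
  refine Finset.sum_congr rfl fun l _ => Finset.sum_congr rfl fun k _ => ?_
  rw [show single k l (D k l) = D k l • single k l 1 by rw [smul_single, smul_eq_mul, mul_one],
    map_smul, hG, smul_eq_mul, mul_comm]

theorem nucNorm_le_frobNorm_of_min_general (m₁ m₂ : ℕ) (f : Matrix (Fin m₁) (Fin m₂) ℝ → ℝ)
    (hconv : ConvexOn ℝ Set.univ f)
    (lam : ℝ) (hlam : 0 < lam)
    (X Xt : Matrix (Fin m₁) (Fin m₂) ℝ)
    (L : Matrix (Fin m₁) (Fin m₂) ℝ →L[ℝ] ℝ) (hL : HasFDerivAt f L Xt)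
    (Gf : Matrix (Fin m₁) (Fin m₂) ℝ)
    (hGf : ∀ k l, Gf k l = L (Matrix.single k l (1 : ℝ)))
    (hmin : f X + lam * nucNorm X ≤ f Xt + lam * nucNorm Xt)
    (hlam2 : 2 * opNorm Gf ≤ lam) :
    nucNorm (X - Xt) ≤ 4 * Real.sqrt (2 * (Xt.rank : ℝ)) * frobNorm (X - Xt) := by
  set D := X - Xt
  have hgrad : f Xt - f X ≤ opNorm Gf * nucNorm D := by
    have h₁ : trace (Gfᵀ * D) ≤ f X - f Xt :=
      apply_eq_trace_transpose_mul L.toLinearMap hGf D ▸ hconv.le_sub_of_hasFDerivAt hL X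
    have h₂ := trace_transpose_mul_le_opNorm_mul_nucNorm Gf (-D)
    rw [Matrix.mul_neg, trace_neg, nucNorm_neg] at h₂
    linarith
  have hX : nucNorm Xt + nucNorm (Pperp Xt D) - nucNorm (Ppar Xt D) ≤ nucNorm X := by
    have h := nucNorm_sub_le X (Ppar Xt D)
    rw [show X - Ppar Xt D = Xt + Pperp Xt D by simp only [Ppar, D]; abel, nucNorm_add_Pperp] at h
    linarith
  have hD : nucNorm D ≤ nucNorm (Ppar Xt D) + nucNorm (Pperp Xt D) := by
    simpa [Ppar] using nucNorm_add_le (Ppar Xt D) (Pperp Xt D)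
  -- `λ(‖P⊥Δ‖ - ‖PΔ‖) ≤ λ(‖X‖ - ‖X̃‖) ≤ f X̃ - f X ≤ (λ/2)‖Δ‖ ≤ (λ/2)(‖PΔ‖ + ‖P⊥Δ‖)`
  have hcone : nucNorm (Pperp Xt D) ≤ 3 * nucNorm (Ppar Xt D) := by
    refine le_of_mul_le_mul_left ?_ hlam
    nlinarith [mul_le_mul_of_nonneg_left hX hlam.le, mul_le_mul_of_nonneg_left hD hlam.le,
      mul_le_mul_of_nonneg_right hlam2 (nucNorm_nonneg D)]
  calc nucNorm D ≤ 4 * nucNorm (Ppar Xt D) := by linarith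
    _ ≤ 4 * (Real.sqrt (Ppar Xt D).rank * frobNorm (Ppar Xt D)) := by
        gcongr
        exact nucNorm_le_sqrt_rank_mul_frobNorm _
    _ ≤ 4 * (Real.sqrt (2 * Xt.rank) * frobNorm D) := by
        gcongr
        · exact Real.sqrt_nonneg _
        · exact_mod_cast rank_Ppar_le Xt D
        · exact frobNorm_Ppar_le Xt D
    _ = 4 * Real.sqrt (2 * Xt.rank) * frobNorm D := by ring

/-- Lemma 2(ii): for a convex differentiable data-fitting term `f` (in the paper
`f = L_Y`), if `X` has smaller penalized objective than `X̃` and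
`λ ≥ 2‖∇f(X̃)‖_{σ,∞}`, then the nuclear norm of the error is controlled by its Frobenius norm. `Gf` is the gradient matrix of `f` at `X̃`,
i.e. the matrix representing the Fréchet derivative `L` of `f` at `X̃`. -/
theorem nucNorm_le_frobNorm_of_min (m₁ m₂ : ℕ) (f : Matrix (Fin m₁) (Fin m₂) ℝ → ℝ)
    (hconv : ConvexOn ℝ Set.univ f) (hdiff : Differentiable ℝ f)
    (lam : ℝ) (hlam : 0 < lam)
    (X Xt : Matrix (Fin m₁) (Fin m₂) ℝ)
    (L : Matrix (Fin m₁) (Fin m₂) ℝ →L[ℝ] ℝ) (hL : HasFDerivAt f L Xt)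
    (Gf : Matrix (Fin m₁) (Fin m₂) ℝ)
    (hGf : ∀ k l, Gf k l = L (Matrix.single k l (1 : ℝ)))
    (hmin : f X + lam * nucNorm X ≤ f Xt + lam * nucNorm Xt)
    (hlam2 : 2 * opNorm Gf ≤ lam) :
    nucNorm (X - Xt) ≤ 4 * Real.sqrt (2 * (Xt.rank : ℝ)) * frobNorm (X - Xt) :=
  nucNorm_le_frobNorm_of_min_general m₁ m₂ f hconv lam hlam X Xt L hL Gf hGf hmin hlam2
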